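/- limsup_{h↓0} max_{0 ≤ t ≤ 1−h} |x̂(t+h) − x̂(t)| / ω(h) = 1, i.e., ω is the exact modulus of continuity of x̂. The lower bound is witnessed at t = 0 with h_n = (2/3)·2^{−n}, where x̂(h_n) − x̂(0) = ω(h_n) − (1 + √2)h_n. -/

import Mathlib

noncomputable def e00 (t : ℝ) : ℝ := max (min t (1 - t)) 0

noncomputable def e (m : ℕ) (k : ℤ) (t : ℝ) : ℝ :=
  (2 : ℝ) ^ (-(m : ℝ) / 2) * e00 ((2 : ℝ) ^ m * t - k)

noncomputable def xhat (t : ℝ) : ℝ :=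
  ∑' m : ℕ, ∑ k ∈ Finset.range (2 ^ m), e m k t

noncomputable def ν (h : ℝ) : ℤ := ⌊-Real.logb 2 h⌋

noncomputable def ω (h : ℝ) : ℝ :=
  (1 + 1 / Real.sqrt 2) * h * (2 : ℝ) ^ ((ν h : ℝ) / 2)
    + (1 / 3) * (2 * Real.sqrt 2 + 2) * (2 : ℝ) ^ (-(ν h : ℝ) / 2)

/-!
On `[0, 1]`, `xhat` is the Takagi–Landsberg function `T x = ∑ 2^(-m/2) ‖2^m x‖`, where `‖y‖` is
the distance from `y` to `ℤ`: at level `m` the tents `e m k` add up to `‖2^m x‖`. `T` is even and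
subadditive, so `|T (t + h) - T t| ≤ T h`. If `1/2 ≤ 2^N h ≤ 1`, the first `N` terms of `T h` are
linear in `h`, and `T h = h ∑_{m<N} √2^m + 2^(-N/2) T (2^N h)`. The maximum of `T` is
`(2 + √2)/3`, attained at `1/3` and `2/3`, and it yields `T c + c/√2 ≤ (2 + 2√2)/3` on `[1/2, 1]`.
Together these give exactly `T h ≤ ω h - (1 + √2) h`, with equality when `2^N h = 2/3`. Along
`h = (2/3) 2^(-n)` the ratio is therefore `1 - (1 + √2) h / ω h → 1`, so the limsup is `1`.
-/

open Real Filter Topology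

namespace UnitAddCircle

lemma coe_intCast (n : ℤ) : ((n : ℝ) : UnitAddCircle) = 0 := by
  rw [AddCircle.coe_eq_zero_iff]; exact ⟨n, by simp⟩

lemma norm_coe_add_intCast (x : ℝ) (n : ℤ) :
    ‖((x + n : ℝ) : UnitAddCircle)‖ = ‖(x : UnitAddCircle)‖ := by
  rw [AddCircle.coe_add, coe_intCast, add_zero]

lemma norm_coe_le_half (x : ℝ) : ‖(x : UnitAddCircle)‖ ≤ 1 / 2 := by
  simpa using AddCircle.norm_le_half_period (p := (1 : ℝ)) (x := (x : UnitAddCircle)) one_ne_zero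

lemma norm_coe_of_nonneg_of_le_half {x : ℝ} (h0 : 0 ≤ x) (h1 : x ≤ 1 / 2) :
    ‖(x : UnitAddCircle)‖ = x := by
  rw [(AddCircle.norm_coe_eq_abs_iff (p := 1) one_ne_zero).2 (by simpa [abs_of_nonneg h0] using h1),
    abs_of_nonneg h0]

lemma norm_coe_of_half_le_of_le_one {x : ℝ} (h0 : 1 / 2 ≤ x) (h1 : x ≤ 1) :
    ‖(x : UnitAddCircle)‖ = 1 - x := by
  have := norm_coe_add_intCast (x - 1) 1
  rw [Int.cast_one, sub_add_cancel] at this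
  rw [this, ← norm_neg, ← AddCircle.coe_neg, neg_sub, norm_coe_of_nonneg_of_le_half] <;> linarith

lemma norm_coe_two_mul {x : ℝ} (h : 1 / 4 ≤ ‖(x : UnitAddCircle)‖) :
    ‖((2 * x : ℝ) : UnitAddCircle)‖ = 1 - 2 * ‖(x : UnitAddCircle)‖ := by
  set d := x - round x
  have hd : ‖(x : UnitAddCircle)‖ = |d| := norm_eq
  have hd2 : |d| ≤ 1 / 2 := abs_sub_round x
  have h2d : ‖((2 * x : ℝ) : UnitAddCircle)‖ = ‖((2 * |d| : ℝ) : UnitAddCircle)‖ := by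
    rw [show 2 * x = 2 * d + ((2 * round x : ℤ) : ℝ) by push_cast; ring, norm_coe_add_intCast]
    rcases abs_cases d with ⟨hd', _⟩ | ⟨hd', _⟩
    · rw [hd']
    · rw [hd', mul_neg, AddCircle.coe_neg, norm_neg]
  rw [h2d, hd, norm_coe_of_half_le_of_le_one] <;> linarith

end UnitAddCircle

lemma Filter.limsup_eq_of_eventually_le_of_tendsto {α ι β : Type*}
    [ConditionallyCompleteLinearOrder β] [TopologicalSpace β] [OrderTopology β]
    [DenselyOrdered β] [NoMinOrder β] {f : Filter α} {l : Filter ι} [l.NeBot] {u : α → β}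
    {a : β} {x : ι → α} (hle : ∀ᶠ y in f, u y ≤ a) (hx : Tendsto x l f)
    (hux : Tendsto (u ∘ x) l (𝓝 a)) : limsup u f = a := by
  have hfreq : ∀ b < a, ∃ᶠ y in f, b ≤ u y := fun b hb =>
    hx.frequently (hux.eventually (eventually_ge_nhds hb)).frequently
  obtain ⟨b, hb⟩ := exists_lt a
  refine le_antisymm (limsup_le_of_le (IsCoboundedUnder.of_frequently_ge (hfreq b hb)) hle)
    (le_of_forall_lt_imp_le_of_dense fun c hc =>
      le_limsup_of_frequently_le (hfreq c hc) (isBoundedUnder_of_eventually_le hle))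

noncomputable def takagiLandsberg (r x : ℝ) : ℝ :=
  ∑' m : ℕ, r ^ m * ‖((2 ^ m * x : ℝ) : UnitAddCircle)‖

section TakagiLandsberg

variable {r : ℝ}

lemma summable_takagiLandsberg (hr0 : 0 ≤ r) (hr1 : r < 1) (x : ℝ) :
    Summable fun m : ℕ => r ^ m * ‖((2 ^ m * x : ℝ) : UnitAddCircle)‖ := by
  refine (summable_geometric_of_lt_one hr0 hr1).of_nonneg_of_le (fun m => by positivity)
    fun m => mul_le_of_le_one_right (pow_nonneg hr0 m) ?_
  linarith [UnitAddCircle.norm_coe_le_half (2 ^ m * x)]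

lemma takagiLandsberg_zero (r : ℝ) : takagiLandsberg r 0 = 0 := by
  simp [takagiLandsberg]

lemma takagiLandsberg_add_intCast (r x : ℝ) (n : ℤ) :
    takagiLandsberg r (x + n) = takagiLandsberg r x := by
  refine tsum_congr fun m => ?_
  rw [mul_add, show (2 : ℝ) ^ m * n = ((2 ^ m * n : ℤ) : ℝ) by push_cast; ring,
    UnitAddCircle.norm_coe_add_intCast]

lemma takagiLandsberg_neg (r x : ℝ) : takagiLandsberg r (-x) = takagiLandsberg r x := by
  refine tsum_congr fun m => ?_
  rw [mul_neg, AddCircle.coe_neg, norm_neg]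

lemma takagiLandsberg_add_le (hr0 : 0 ≤ r) (hr1 : r < 1) (x y : ℝ) :
    takagiLandsberg r (x + y) ≤ takagiLandsberg r x + takagiLandsberg r y := by
  rw [takagiLandsberg, takagiLandsberg, takagiLandsberg,
    ← (summable_takagiLandsberg hr0 hr1 x).tsum_add (summable_takagiLandsberg hr0 hr1 y)]
  refine (summable_takagiLandsberg hr0 hr1 _).tsum_le_tsum (fun m => ?_)
    ((summable_takagiLandsberg hr0 hr1 x).add (summable_takagiLandsberg hr0 hr1 y))
  rw [← mul_add, mul_add, AddCircle.coe_add]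
  exact mul_le_mul_of_nonneg_left (norm_add_le _ _) (pow_nonneg hr0 m)

lemma abs_takagiLandsberg_sub_le (hr0 : 0 ≤ r) (hr1 : r < 1) (x y : ℝ) :
    |takagiLandsberg r y - takagiLandsberg r x| ≤ takagiLandsberg r (y - x) := by
  have hx := takagiLandsberg_add_le hr0 hr1 x (y - x)
  have hy := takagiLandsberg_add_le hr0 hr1 y (x - y)
  rw [add_sub_cancel] at hx hy
  rw [← neg_sub y x, takagiLandsberg_neg] at hy
  exact abs_sub_le_iff.2 ⟨by linarith, by linarith⟩

lemma takagiLandsberg_eq_add (hr0 : 0 ≤ r) (hr1 : r < 1) (x : ℝ) :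
    takagiLandsberg r x = ‖(x : UnitAddCircle)‖ + r * takagiLandsberg r (2 * x) := by
  rw [takagiLandsberg, (summable_takagiLandsberg hr0 hr1 x).tsum_eq_zero_add, takagiLandsberg,
    ← tsum_mul_left]
  congr 1
  · simp
  · refine tsum_congr fun m => ?_
    rw [pow_succ, pow_succ]
    ring_nf

lemma takagiLandsberg_eq_sum_add (hr0 : 0 ≤ r) (hr1 : r < 1) (N : ℕ) (x : ℝ) :
    takagiLandsberg r x = ∑ m ∈ Finset.range N, r ^ m * ‖((2 ^ m * x : ℝ) : UnitAddCircle)‖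
      + r ^ N * takagiLandsberg r (2 ^ N * x) := by
  induction N with
  | zero => simp
  | succ N ih =>
    rw [ih, Finset.sum_range_succ, takagiLandsberg_eq_add hr0 hr1 (2 ^ N * x), pow_succ]
    ring_nf

lemma takagiLandsberg_le_inv_one_sub (hr0 : 0 ≤ r) (hr1 : r < 1) (x : ℝ) :
    takagiLandsberg r x ≤ (1 - r)⁻¹ := by
  rw [← tsum_geometric_of_lt_one hr0 hr1]
  refine (summable_takagiLandsberg hr0 hr1 x).tsum_le_tsum
    (fun m => mul_le_of_le_one_right (pow_nonneg hr0 m) ?_) (summable_geometric_of_lt_one hr0 hr1)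
  linarith [UnitAddCircle.norm_coe_le_half (2 ^ m * x)]

lemma takagiLandsberg_eq_geom_sum_add (hr0 : 0 ≤ r) (hr1 : r < 1) {N : ℕ} {x : ℝ}
    (hx0 : 0 ≤ x) (hxN : 2 ^ N * x ≤ 1) :
    takagiLandsberg r x = x * ∑ m ∈ Finset.range N, (2 * r) ^ m
      + r ^ N * takagiLandsberg r (2 ^ N * x) := by
  rw [takagiLandsberg_eq_sum_add hr0 hr1 N, Finset.mul_sum]
  congr 1
  refine Finset.sum_congr rfl fun m hm => ?_
  have h2m : 2 * (2 ^ m * x) ≤ 2 ^ N * x := by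
    rw [← mul_assoc, ← pow_succ']
    exact mul_le_mul_of_nonneg_right (pow_le_pow_right₀ one_le_two (Finset.mem_range.1 hm)) hx0
  rw [UnitAddCircle.norm_coe_of_nonneg_of_le_half (by positivity) (by linarith), mul_pow]
  ring

lemma takagiLandsberg_one_third (hr0 : 0 ≤ r) (hr1 : r < 1) :
    takagiLandsberg r (1 / 3) = (3 * (1 - r))⁻¹ := by
  have h13 := takagiLandsberg_eq_add hr0 hr1 (1 / 3)
  have h23 := takagiLandsberg_eq_add hr0 hr1 (2 / 3)
  rw [show 2 * (2 / 3 : ℝ) = 1 / 3 + (1 : ℤ) by norm_num, takagiLandsberg_add_intCast,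
    UnitAddCircle.norm_coe_of_half_le_of_le_one (by norm_num) (by norm_num)] at h23
  rw [UnitAddCircle.norm_coe_of_nonneg_of_le_half (by norm_num) (by norm_num),
    show 2 * (1 / 3 : ℝ) = 2 / 3 by norm_num, h23] at h13
  refine eq_inv_of_mul_eq_one_left (mul_left_cancel₀ (by linarith : (1 + r) ≠ 0) ?_)
  linear_combination 3 * h13

lemma takagiLandsberg_two_thirds (hr0 : 0 ≤ r) (hr1 : r < 1) :
    takagiLandsberg r (2 / 3) = (3 * (1 - r))⁻¹ := by
  rw [show (2 / 3 : ℝ) = -(1 / 3) + (1 : ℤ) by norm_num, takagiLandsberg_add_intCast,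
    takagiLandsberg_neg, takagiLandsberg_one_third hr0 hr1]

/- `S = sup T` satisfies `S ≤ max (1/3 + r S) ((1 + r)/3 + r² S)`, and either alternative forces
`(1 - r) S ≤ 1/3`. -/
lemma takagiLandsberg_le (hr : 1 / 2 ≤ r) (hr1 : r < 1) (x : ℝ) :
    takagiLandsberg r x ≤ (3 * (1 - r))⁻¹ := by
  have hr0 : 0 ≤ r := by linarith
  have hbdd : BddAbove (Set.range (takagiLandsberg r)) :=
    ⟨(1 - r)⁻¹, Set.forall_mem_range.2 (takagiLandsberg_le_inv_one_sub hr0 hr1)⟩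
  set S := ⨆ y, takagiLandsberg r y
  have hS : ∀ y, takagiLandsberg r y ≤ S := le_ciSup hbdd
  have step : ∀ y, takagiLandsberg r y ≤ max (1 / 3 + r * S) ((1 + r) / 3 + r ^ 2 * S) := by
    intro y
    rw [takagiLandsberg_eq_add hr0 hr1 y]
    by_cases hy : ‖(y : UnitAddCircle)‖ ≤ 1 / 3
    · exact le_max_of_le_left (add_le_add hy (mul_le_mul_of_nonneg_left (hS _) hr0))
    · refine le_max_of_le_right ?_
      rw [takagiLandsberg_eq_add hr0 hr1 (2 * y), UnitAddCircle.norm_coe_two_mul (by linarith)]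
      -- the first two terms `g + r (1 - 2 g)` decrease in `g = ‖y‖ ≥ 1/3` since `r ≥ 1/2`
      nlinarith [hS (2 * (2 * y)), mul_nonneg (by linarith : 0 ≤ 2 * r - 1)
        (by linarith : 0 ≤ ‖(y : UnitAddCircle)‖ - 1 / 3)]
  have hSle : S * (3 * (1 - r)) ≤ 1 := by
    rcases le_max_iff.1 (ciSup_le step) with h | h
    · linarith
    · nlinarith
  rw [← one_div, le_div_iff₀ (by linarith)]
  exact (mul_le_mul_of_nonneg_right (hS x) (by linarith)).trans hSle

lemma takagiLandsberg_add_mul_le (hr : 1 / 2 ≤ r) (hr1 : r < 1) {c : ℝ} (hc : 1 / 2 ≤ c)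
    (hc1 : c ≤ 1) : takagiLandsberg r c + r * c ≤ (3 * (1 - r))⁻¹ + 2 * r / 3 := by
  -- sharp at `c = 2/3`; with `c = (1 + u)/2`, split at `u = 1/3`
  have hr0 : 0 ≤ r := by linarith
  set M := (3 * (1 - r))⁻¹
  have hM : M * (3 * (1 - r)) = 1 := inv_mul_cancel₀ (by linarith)
  set u := 2 * c - 1
  have hTc : takagiLandsberg r c = (1 - c) + r * takagiLandsberg r u := by
    rw [takagiLandsberg_eq_add hr0 hr1, UnitAddCircle.norm_coe_of_half_le_of_le_one hc hc1,
      show 2 * c = u + (1 : ℤ) by push_cast; ring, takagiLandsberg_add_intCast]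
  rw [hTc]
  by_cases hu : u ≤ 1 / 3
  · have hTu : takagiLandsberg r u = u + r * takagiLandsberg r (2 * u) := by
      rw [takagiLandsberg_eq_add hr0 hr1,
        UnitAddCircle.norm_coe_of_nonneg_of_le_half (by linarith) (by linarith)]
    have hT2u := mul_le_mul_of_nonneg_left (takagiLandsberg_le hr hr1 (2 * u)) (sq_nonneg r)
    rw [hTu]
    nlinarith [mul_nonneg (by linarith : 0 ≤ 3 * r - 1) (by linarith : 0 ≤ 1 / 3 - u)]
  · have hTu := mul_le_mul_of_nonneg_left (takagiLandsberg_le hr hr1 u) hr0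
    nlinarith [mul_nonneg (by linarith : 0 ≤ 1 - r) (by linarith : 0 ≤ u - 1 / 3)]

/- When `1/2 ≤ 2^N h ≤ 1`: the exact first `N` terms of `takagiLandsberg r h` plus `r^N` times the
bound of `takagiLandsberg_add_mul_le` at `c = 2^N h`. -/
noncomputable def takagiMajorant (r : ℝ) (N : ℕ) (h : ℝ) : ℝ :=
  h * ∑ m ∈ Finset.range N, (2 * r) ^ m
    + r ^ N * ((3 * (1 - r))⁻¹ + 2 * r / 3 - r * (2 ^ N * h))

lemma takagiLandsberg_le_takagiMajorant (hr : 1 / 2 ≤ r) (hr1 : r < 1) {N : ℕ} {h : ℝ}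
    (hh : 0 ≤ h) (hN : 1 / 2 ≤ 2 ^ N * h) (hN1 : 2 ^ N * h ≤ 1) :
    takagiLandsberg r h ≤ takagiMajorant r N h := by
  have hr0 : 0 ≤ r := by linarith
  rw [takagiLandsberg_eq_geom_sum_add hr0 hr1 hh hN1, takagiMajorant]
  gcongr
  linarith [takagiLandsberg_add_mul_le hr hr1 hN hN1]

lemma takagiLandsberg_eq_takagiMajorant (hr0 : 0 ≤ r) (hr1 : r < 1) {N : ℕ} {h : ℝ}
    (hN : 2 ^ N * h = 2 / 3) : takagiLandsberg r h = takagiMajorant r N h := by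
  have hh : 0 ≤ h := (mul_nonneg_iff_of_pos_left (pow_pos two_pos N)).1 (by rw [hN]; norm_num)
  rw [takagiLandsberg_eq_geom_sum_add hr0 hr1 hh (by rw [hN]; norm_num), takagiMajorant, hN,
    takagiLandsberg_two_thirds hr0 hr1]
  ring

end TakagiLandsberg

lemma half_le_inv_sqrt_two : 1 / 2 ≤ (√2)⁻¹ := by
  rw [one_div]
  exact inv_anti₀ (by positivity) (sqrt_le_iff.2 ⟨zero_le_two, by norm_num⟩)

lemma inv_sqrt_two_lt_one : (√2)⁻¹ < 1 := inv_lt_one_of_one_lt₀ one_lt_sqrt_two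

lemma e00_eq_norm {y : ℝ} (h0 : 0 ≤ y) (h1 : y ≤ 1) : e00 y = ‖(y : UnitAddCircle)‖ := by
  rcases le_total y (1 / 2) with hy | hy
  · rw [UnitAddCircle.norm_coe_of_nonneg_of_le_half h0 hy, e00, min_eq_left (by linarith),
      max_eq_left h0]
  · rw [UnitAddCircle.norm_coe_of_half_le_of_le_one hy h1, e00, min_eq_right (by linarith),
      max_eq_left (by linarith)]

lemma e00_sub_natCast_eq_zero {x : ℝ} {j k : ℕ} (hj : j ≤ x) (hj1 : x ≤ j + 1) (hk : k ≠ j) :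
    e00 (x - k) = 0 := by
  refine max_eq_right ?_
  rcases hk.lt_or_gt with hk | hk
  · have : (k : ℝ) + 1 ≤ j := by exact_mod_cast hk
    exact (min_le_right _ _).trans (by linarith)
  · have : (j : ℝ) + 1 ≤ k := by exact_mod_cast hk
    exact (min_le_left _ _).trans (by linarith)

lemma sum_range_e00_sub_natCast {K : ℕ} (hK : 0 < K) {x : ℝ} (h0 : 0 ≤ x) (hxK : x ≤ K) :
    ∑ k ∈ Finset.range K, e00 (x - k) = ‖(x : UnitAddCircle)‖ := by
  obtain ⟨j, hjdef⟩ : ∃ j, j = min ⌊x⌋₊ (K - 1) := ⟨_, rfl⟩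
  have hj : (j : ℝ) ≤ x := (Nat.cast_le.2 (hjdef ▸ min_le_left _ _)).trans (Nat.floor_le h0)
  have hj1 : x ≤ j + 1 := by
    rcases min_choice ⌊x⌋₊ (K - 1) with h | h
    · rw [hjdef, h]; exact (Nat.lt_floor_add_one x).le
    · rw [hjdef, h, Nat.cast_sub hK, Nat.cast_one]; linarith
  rw [Finset.sum_eq_single_of_mem j (Finset.mem_range.2 (by omega))
      fun k _ hk => e00_sub_natCast_eq_zero hj hj1 hk,
    e00_eq_norm (by linarith) (by linarith), ← UnitAddCircle.norm_coe_add_intCast _ j]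
  push_cast
  rw [sub_add_cancel]

lemma two_rpow_neg_natCast_div_two (m : ℕ) : (2 : ℝ) ^ (-(m : ℝ) / 2) = (√2)⁻¹ ^ m := by
  rw [rpow_div_two_eq_sqrt _ zero_le_two, rpow_neg (sqrt_nonneg 2), rpow_natCast, inv_pow]

lemma sum_range_e (m : ℕ) {t : ℝ} (h0 : 0 ≤ t) (h1 : t ≤ 1) :
    ∑ k ∈ Finset.range (2 ^ m), e m k t = (√2)⁻¹ ^ m * ‖((2 ^ m * t : ℝ) : UnitAddCircle)‖ := by
  simp only [e, Int.cast_natCast, two_rpow_neg_natCast_div_two, ← Finset.mul_sum]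
  rw [sum_range_e00_sub_natCast (by positivity) (by positivity)
    (by push_cast; exact mul_le_of_le_one_right (by positivity) h1)]

lemma xhat_eq_takagiLandsberg {t : ℝ} (h0 : 0 ≤ t) (h1 : t ≤ 1) :
    xhat t = takagiLandsberg (√2)⁻¹ t :=
  tsum_congr fun m => sum_range_e m h0 h1

lemma nu_eq_log {h : ℝ} (hh : 0 ≤ h) : ν h = Int.log 2 h⁻¹ := by
  rw [ν, ← logb_inv, ← floor_logb_natCast (b := 2) (inv_nonneg.2 hh), Nat.cast_ofNat]

lemma nu_nonneg {h : ℝ} (hh0 : 0 < h) (hh1 : h ≤ 1) : 0 ≤ ν h := by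
  rw [nu_eq_log hh0.le, ← Int.log_one_right (R := ℝ) 2]
  exact Int.log_mono_right one_pos (one_le_inv₀ hh0 |>.2 hh1)

lemma nu_eq_iff {h : ℝ} (hh : 0 < h) {N : ℤ} :
    ν h = N ↔ 1 / 2 < 2 ^ N * h ∧ 2 ^ N * h ≤ 1 := by
  have hlo : 2 ^ N * h ≤ 1 ↔ N ≤ Int.log 2 h⁻¹ := by
    rw [← le_div_iff₀ hh, one_div]
    exact_mod_cast Int.zpow_le_iff_le_log (b := 2) one_lt_two (inv_pos.2 hh)
  have hhi : 1 / 2 < 2 ^ N * h ↔ Int.log 2 h⁻¹ < N + 1 := by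
    rw [← Int.lt_zpow_iff_log_lt (b := 2) one_lt_two (inv_pos.2 hh), Nat.cast_ofNat,
      inv_lt_iff_one_lt_mul₀ hh, zpow_add_one₀ two_ne_zero]
    constructor <;> intro <;> linarith
  rw [nu_eq_log hh.le, hlo, hhi]
  omega

lemma omega_eq_of_nu_eq {h : ℝ} {N : ℕ} (hN : ν h = N) :
    ω h = (1 + (√2)⁻¹) * h * √2 ^ N + (2 * √2 + 2) / 3 * (√2)⁻¹ ^ N := by
  rw [ω, hN, Int.cast_natCast, rpow_div_two_eq_sqrt _ zero_le_two, rpow_natCast,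
    two_rpow_neg_natCast_div_two, one_div]
  ring

lemma omega_sub_eq_takagiMajorant {h : ℝ} {N : ℕ} (hN : ν h = N) :
    ω h - (1 + √2) * h = takagiMajorant (√2)⁻¹ N h := by
  rw [omega_eq_of_nu_eq hN]
  set s := √2
  have hs : s ^ 2 = 2 := sq_sqrt zero_le_two
  have hs0 : s ≠ 0 := by positivity
  have h2r : 2 * s⁻¹ = s := by field_simp; linarith
  have hM : (3 * (1 - s⁻¹))⁻¹ = (2 + s) / 3 := by
    have hs1 : s - 1 ≠ 0 := sub_ne_zero.2 one_lt_sqrt_two.ne'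
    field_simp
    linear_combination -hs
  have hsum : ∑ m ∈ Finset.range N, s ^ m = (s + 1) * (s ^ N - 1) := by
    have := geom_sum_mul s N
    linear_combination (s + 1) * this - (∑ m ∈ Finset.range N, s ^ m) * hs
  have hpow : s⁻¹ ^ N * 2 ^ N = s ^ N := by rw [← mul_pow, mul_comm, h2r]
  rw [takagiMajorant, h2r, hM, hsum]
  linear_combination (h * s ^ N) * h2r + (s⁻¹ * h) * hpow

lemma two_pow_mul_two_thirds_mul_zpow (n : ℕ) :
    (2 : ℝ) ^ n * ((2 / 3) * 2 ^ (-(n : ℤ))) = 2 / 3 := by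
  rw [zpow_neg, zpow_natCast]; field_simp

lemma two_thirds_mul_zpow_le_one (n : ℕ) : (2 / 3) * (2 : ℝ) ^ (-(n : ℤ)) ≤ 1 := by
  rw [zpow_neg, zpow_natCast]
  exact mul_le_one₀ (by norm_num) (by positivity) (inv_le_one_of_one_le₀ (one_le_pow₀ one_le_two))

lemma nu_two_thirds_mul_zpow (n : ℕ) : ν ((2 / 3) * (2 : ℝ) ^ (-(n : ℤ))) = n :=
  (nu_eq_iff (by positivity)).2 (by rw [zpow_natCast, two_pow_mul_two_thirds_mul_zpow]; norm_num)

lemma takagiLandsberg_le_omega_sub {h : ℝ} (hh0 : 0 < h) (hh1 : h ≤ 1) :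
    takagiLandsberg (√2)⁻¹ h ≤ ω h - (1 + √2) * h := by
  obtain ⟨N, hN⟩ := Int.eq_ofNat_of_zero_le (nu_nonneg hh0 hh1)
  obtain ⟨hlo, hhi⟩ := (nu_eq_iff hh0).1 hN
  rw [zpow_natCast] at hlo hhi
  rw [omega_sub_eq_takagiMajorant hN]
  exact takagiLandsberg_le_takagiMajorant half_le_inv_sqrt_two inv_sqrt_two_lt_one hh0.le
    hlo.le hhi

lemma takagiLandsberg_eq_omega_sub (n : ℕ) :
    takagiLandsberg (√2)⁻¹ ((2 / 3) * (2 : ℝ) ^ (-(n : ℤ)))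
      = ω ((2 / 3) * (2 : ℝ) ^ (-(n : ℤ))) - (1 + √2) * ((2 / 3) * (2 : ℝ) ^ (-(n : ℤ))) := by
  rw [omega_sub_eq_takagiMajorant (nu_two_thirds_mul_zpow n)]
  exact takagiLandsberg_eq_takagiMajorant (by positivity) inv_sqrt_two_lt_one
    (two_pow_mul_two_thirds_mul_zpow n)

lemma tendsto_two_thirds_mul_zpow :
    Tendsto (fun n : ℕ => (2 / 3) * (2 : ℝ) ^ (-(n : ℤ))) atTop (𝓝[>] 0) := by
  refine tendsto_nhdsWithin_of_tendsto_nhds_of_eventually_within _ ?_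
    (Eventually.of_forall fun n => Set.mem_Ioi.2 (by positivity))
  simpa [zpow_neg, zpow_natCast, ← inv_pow] using
    (tendsto_pow_atTop_nhds_zero_of_lt_one (by norm_num : (0 : ℝ) ≤ 2⁻¹)
      (by norm_num)).const_mul (2 / 3 : ℝ)

lemma omega_pos {h : ℝ} (hh : 0 < h) : 0 < ω h := by
  unfold ω; positivity

lemma one_add_sqrt_two_mul_le (n : ℕ) :
    (1 + √2) * ((2 / 3) * (2 : ℝ) ^ (-(n : ℤ)))
      ≤ (√2)⁻¹ ^ n * ω ((2 / 3) * (2 : ℝ) ^ (-(n : ℤ))) := by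
  have h2 : (2 : ℝ) ^ (-(n : ℤ)) = (√2)⁻¹ ^ n * (√2)⁻¹ ^ n := by
    rw [← mul_pow, ← mul_inv, mul_self_sqrt zero_le_two, zpow_neg, zpow_natCast, inv_pow]
  rw [omega_eq_of_nu_eq (nu_two_thirds_mul_zpow n), h2]
  nlinarith [show 0 ≤ (1 + (√2)⁻¹) * ((2 / 3) * ((√2)⁻¹ ^ n * (√2)⁻¹ ^ n)) * √2 ^ n * (√2)⁻¹ ^ n
    by positivity]

lemma abs_xhat_add_sub_le {h t : ℝ} (hh : 0 < h) (ht0 : 0 ≤ t) (ht : t ≤ 1 - h) :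
    |xhat (t + h) - xhat t| ≤ ω h - (1 + √2) * h := by
  rw [xhat_eq_takagiLandsberg (by linarith) (by linarith),
    xhat_eq_takagiLandsberg ht0 (by linarith)]
  calc _ ≤ takagiLandsberg (√2)⁻¹ (t + h - t) :=
        abs_takagiLandsberg_sub_le (by positivity) inv_sqrt_two_lt_one _ _
    _ = takagiLandsberg (√2)⁻¹ h := by rw [add_sub_cancel_left]
    _ ≤ _ := takagiLandsberg_le_omega_sub hh (by linarith)

lemma iSup_abs_xhat_add_sub_le {h : ℝ} (hh0 : 0 < h) (hh1 : h ≤ 1) :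
    ⨆ t : Set.Icc (0 : ℝ) (1 - h), |xhat (↑t + h) - xhat ↑t| ≤ ω h - (1 + √2) * h :=
  haveI : Nonempty (Set.Icc (0 : ℝ) (1 - h)) := ⟨⟨0, le_rfl, by linarith⟩⟩
  ciSup_le fun t => abs_xhat_add_sub_le hh0 t.2.1 t.2.2

lemma xhat_two_thirds_mul_zpow_sub_xhat_zero (n : ℕ) :
    xhat ((2 / 3) * (2 : ℝ) ^ (-(n : ℤ))) - xhat 0
      = ω ((2 / 3) * (2 : ℝ) ^ (-(n : ℤ))) - (1 + √2) * ((2 / 3) * (2 : ℝ) ^ (-(n : ℤ))) := by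
  rw [xhat_eq_takagiLandsberg (by positivity) (two_thirds_mul_zpow_le_one n),
    xhat_eq_takagiLandsberg le_rfl zero_le_one, takagiLandsberg_zero, sub_zero,
    takagiLandsberg_eq_omega_sub]

lemma iSup_abs_xhat_add_sub_two_thirds_mul_zpow (n : ℕ) :
    ⨆ t : Set.Icc (0 : ℝ) (1 - (2 / 3) * 2 ^ (-(n : ℤ))),
        |xhat (↑t + (2 / 3) * 2 ^ (-(n : ℤ))) - xhat ↑t|
      = ω ((2 / 3) * (2 : ℝ) ^ (-(n : ℤ))) - (1 + √2) * ((2 / 3) * (2 : ℝ) ^ (-(n : ℤ))) := by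
  have hn0 : 0 < (2 / 3) * (2 : ℝ) ^ (-(n : ℤ)) := by positivity
  have hn1 := two_thirds_mul_zpow_le_one n
  refine le_antisymm (iSup_abs_xhat_add_sub_le hn0 hn1)
    (le_ciSup_of_le ?_ ⟨0, le_rfl, by linarith⟩ ?_)
  · exact ⟨_, Set.forall_mem_range.2 fun t => abs_xhat_add_sub_le hn0 t.2.1 t.2.2⟩
  · rw [zero_add, xhat_two_thirds_mul_zpow_sub_xhat_zero]
    exact le_abs_self _

lemma tendsto_one_add_sqrt_two_mul_div_omega :
    Tendsto (fun n : ℕ => (1 + √2) * ((2 / 3) * (2 : ℝ) ^ (-(n : ℤ)))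
      / ω ((2 / 3) * (2 : ℝ) ^ (-(n : ℤ)))) atTop (𝓝 0) :=
  squeeze_zero (fun n => div_nonneg (by positivity) (omega_pos (by positivity)).le)
    (fun n => div_le_of_le_mul₀ (omega_pos (by positivity)).le (by positivity)
      (one_add_sqrt_two_mul_le n))
    (tendsto_pow_atTop_nhds_zero_of_lt_one (by positivity) inv_sqrt_two_lt_one)

theorem stmt_12 :
    Filter.limsup
      (fun h : ℝ => (⨆ t : Set.Icc (0 : ℝ) (1 - h), |xhat (↑t + h) - xhat ↑t|) / ω h)
      (nhdsWithin 0 (Set.Ioi 0)) = 1 ∧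
    ∀ n : ℕ, xhat ((2 / 3) * (2 : ℝ) ^ (-(n : ℤ))) - xhat 0
      = ω ((2 / 3) * (2 : ℝ) ^ (-(n : ℤ)))
        - (1 + Real.sqrt 2) * ((2 / 3) * (2 : ℝ) ^ (-(n : ℤ))) := by
  refine ⟨Filter.limsup_eq_of_eventually_le_of_tendsto ?_ tendsto_two_thirds_mul_zpow ?_,
    xhat_two_thirds_mul_zpow_sub_xhat_zero⟩
  · filter_upwards [Ioo_mem_nhdsGT one_pos] with h ⟨hh0, hh1⟩
    refine div_le_one_of_le₀ ((iSup_abs_xhat_add_sub_le hh0 hh1.le).trans ?_) (omega_pos hh0).le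
    nlinarith [sqrt_nonneg 2]
  · convert (tendsto_const_nhds (x := (1 : ℝ))).sub tendsto_one_add_sqrt_two_mul_div_omega
      using 2 with n
    · rw [Function.comp_apply, iSup_abs_xhat_add_sub_two_thirds_mul_zpow, sub_div,
        div_self (omega_pos (by positivity)).ne']
    · rw [sub_zero]
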